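/- Let η : ℝ → ℝ₊ be a C^∞ even function such that x ↦ η(√x) is completely monotone on (0,∞) in the sense that (−1)^m ∂_x^m[η(√x)] ≥ 0 for all m ∈ ℕ and x > 0. Then, with the coefficients c_{j,m} from the recursion starting at c_{1,1} = −1, one has the identity ∂_x^m[η(√x)] = −((m−1)!/2^{2m−1}) x^{−m} Σ_{j=1}^m c_{j,m} x^{j/2} η^{(j)}(√x) for all m ≥ 1 and x > 0. -/

import Mathlib

/-- The coefficients `c_{j,m}`: `c_{1,1} = −1` and for `m ≥ 2`,
`c_{j,m} = (2j/(m−1) − 4)·c_{j,m−1}·1_{j<m} + (2/(m−1))·c_{j−1,m−1}·1_{j>1}`. -/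
noncomputable def cCoef : ℕ → ℕ → ℝ
  | _, 0 => 0
  | j, 1 => if j = 1 then -1 else 0
  | j, m + 2 =>
      (if j < m + 2 then (2 * (j : ℝ) / ((m : ℝ) + 1) - 4) * cCoef j (m + 1) else 0)
      + (if 1 < j then 2 / ((m : ℝ) + 1) * cCoef (j - 1) (m + 1) else 0)

lemma sum_shift (m : ℕ) (h : ℕ → ℝ) :
    ∑ j ∈ Finset.Icc 2 (m+1), h j = ∑ j ∈ Finset.Icc 1 m, h (j+1) := by
  rw [show (2:ℕ) = 1 + 1 from rfl, ← Finset.map_add_right_Icc 1 m 1, Finset.sum_map]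
  simp [addRightEmbedding]

lemma cCoef_key (m : ℕ) (hm : 1 ≤ m) (G : ℕ → ℝ) :
    (m:ℝ)/4 * ∑ j ∈ Finset.Icc 1 (m+1), cCoef j (m+1) * G j
      = -(m:ℝ) * ∑ j ∈ Finset.Icc 1 m, cCoef j m * G j
        + (1/2) * ∑ j ∈ Finset.Icc 1 m, cCoef j m * ((j:ℝ) * G j + G (j+1)) := by
  have hm0 : (m:ℝ) ≠ 0 := by positivity
  have hcoef : ∀ j, cCoef j (m+1)
      = (if j < m + 1 then (2 * (j : ℝ) / (m : ℝ) - 4) * cCoef j m else 0)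
        + (if 1 < j then 2 / (m : ℝ) * cCoef (j - 1) m else 0) := by
    intro j
    obtain ⟨k, hk⟩ := Nat.exists_eq_add_of_le hm
    rw [show m + 1 = k + 2 by omega, cCoef,
      show ((k:ℝ) + 1) = (m:ℝ) by push_cast [hk]; ring, show k + 1 = m by omega,
      show k + 2 = m + 1 by omega]
  have split : ∑ j ∈ Finset.Icc 1 (m+1), cCoef j (m+1) * G j
      = (∑ j ∈ Finset.Icc 1 m, (2 * (j : ℝ) / (m : ℝ) - 4) * cCoef j m * G j)
        + ∑ j ∈ Finset.Icc 1 m, 2 / (m : ℝ) * cCoef j m * G (j+1) := by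
    calc ∑ j ∈ Finset.Icc 1 (m+1), cCoef j (m+1) * G j
        = (∑ j ∈ Finset.Icc 1 (m+1),
            (if j < m + 1 then (2 * (j : ℝ) / (m : ℝ) - 4) * cCoef j m else 0) * G j)
          + ∑ j ∈ Finset.Icc 1 (m+1),
            (if 1 < j then 2 / (m : ℝ) * cCoef (j - 1) m else 0) * G j := by
          rw [← Finset.sum_add_distrib]
          exact Finset.sum_congr rfl fun j _ => by rw [hcoef j, add_mul]
      _ = _ := by
          congr 1
          · rw [Finset.sum_Icc_succ_top (by omega)]
            simp only [lt_self_iff_false, if_false, zero_mul, add_zero]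
            exact Finset.sum_congr rfl fun j hj => by
              rw [if_pos (by simp [Finset.mem_Icc] at hj; omega)]
          · rw [show Finset.Icc 1 (m+1) = insert 1 (Finset.Icc 2 (m+1)) by
                ext a; simp only [Finset.mem_Icc, Finset.mem_insert]; omega,
              Finset.sum_insert (by simp), sum_shift]
            simp only [lt_self_iff_false, if_false, zero_mul, zero_add]
            exact Finset.sum_congr rfl fun j hj => by
              rw [if_pos (by simp only [Finset.mem_Icc] at hj; omega), Nat.add_sub_cancel]
  rw [split, mul_add, Finset.mul_sum, Finset.mul_sum, Finset.mul_sum, Finset.mul_sum,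
    ← Finset.sum_add_distrib, ← Finset.sum_add_distrib]
  exact Finset.sum_congr rfl fun j hj => by field_simp; ring

open scoped ContDiff in
lemma smooth_iter {η : ℝ → ℝ} (hη : ContDiff ℝ (⊤ : ℕ∞) η) (j : ℕ) :
    ContDiff ℝ ∞ (iteratedDeriv j η) := by
  rw [iteratedDeriv_eq_iterate]
  exact ContDiff.iterate_deriv (f := η) j (hη.of_le (by simp))

lemma hasDerivAt_g {η : ℝ → ℝ} (hη : ContDiff ℝ (⊤ : ℕ∞) η) (j : ℕ) {x : ℝ} (hx : 0 < x) :
    HasDerivAt (fun y : ℝ => y ^ ((j:ℝ)/2) * iteratedDeriv j η (Real.sqrt y))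
      (1/(2*x) * ((j:ℝ) * (x ^ ((j:ℝ)/2) * iteratedDeriv j η (Real.sqrt x))
        + x ^ (((j+1 : ℕ):ℝ)/2) * iteratedDeriv (j+1) η (Real.sqrt x))) x := by
  have hsne : Real.sqrt x ≠ 0 := (Real.sqrt_pos.mpr hx).ne'
  have h1 : HasDerivAt (fun y : ℝ => y ^ ((j:ℝ)/2)) (((j:ℝ)/2) * x ^ ((j:ℝ)/2 - 1)) x :=
    Real.hasDerivAt_rpow_const (Or.inl hx.ne')
  have hd : HasDerivAt (iteratedDeriv j η)
      (iteratedDeriv (j+1) η (Real.sqrt x)) (Real.sqrt x) := by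
    have h := (((smooth_iter hη j).differentiable (by simp)) (Real.sqrt x)).hasDerivAt
    rwa [iteratedDeriv_succ]
  have h2 : HasDerivAt (fun y : ℝ => iteratedDeriv j η (Real.sqrt y))
      (iteratedDeriv (j+1) η (Real.sqrt x) * (1/(2*Real.sqrt x))) x :=
    hd.comp x (Real.hasDerivAt_sqrt hx.ne')
  refine (h1.mul h2).congr_deriv ?_
  symm
  rw [Real.rpow_sub hx, Real.rpow_one,
    show (((j+1:ℕ)):ℝ)/2 = (j:ℝ)/2 + 1/2 by push_cast; ring,
    Real.rpow_add hx, ← Real.sqrt_eq_rpow]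
  set A := x ^ ((j:ℝ)/2) with hA
  set s := Real.sqrt x with hs
  have hss : s * s = x := Real.mul_self_sqrt hx.le
  rw [← hss]
  field_simp

/-- For a smooth even nonnegative `η` such that `x ↦ η(√x)` is completely monotone on
`(0,∞)`, one has
`∂_x^m[η(√x)] = −((m−1)!/2^{2m−1}) x^{−m} Σ_{j=1}^m c_{j,m} x^{j/2} η^{(j)}(√x)`. -/
theorem stmt_11 (η : ℝ → ℝ) (hη : ContDiff ℝ (⊤ : ℕ∞) η) (hnonneg : ∀ x, 0 ≤ η x)
    (heven : ∀ x, η (-x) = η x)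
    (hcm : ∀ m : ℕ, ∀ x : ℝ, 0 < x →
      0 ≤ (-1 : ℝ) ^ m * iteratedDeriv m (fun y => η (Real.sqrt y)) x) :
    ∀ m : ℕ, 1 ≤ m → ∀ x : ℝ, 0 < x →
      iteratedDeriv m (fun y => η (Real.sqrt y)) x
        = -((Nat.factorial (m - 1) : ℝ) / 2 ^ (2 * m - 1)) * (x ^ m)⁻¹ *
            ∑ j ∈ Finset.Icc 1 m,
              cCoef j m * x ^ ((j : ℝ) / 2) * iteratedDeriv j η (Real.sqrt x) := by
  intro m hm
  induction m, hm using Nat.le_induction with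
  | base =>
    intro x hx
    have h0 := hasDerivAt_g hη 0 hx
    have hF : HasDerivAt (fun y => η (Real.sqrt y))
        (1/(2*x) * (((0:ℕ):ℝ) * (x ^ (((0:ℕ):ℝ)/2) * iteratedDeriv 0 η (Real.sqrt x))
          + x ^ (((0+1 : ℕ):ℝ)/2) * iteratedDeriv (0+1) η (Real.sqrt x))) x := by
      refine h0.congr_of_eventuallyEq (Filter.Eventually.of_forall fun y => ?_)
      simp [iteratedDeriv_zero]
    rw [iteratedDeriv_one, hF.deriv]
    simp only [Finset.Icc_self, Finset.sum_singleton]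
    rw [show cCoef 1 1 = -1 by simp [cCoef]]
    push_cast
    simp only [Nat.factorial_zero, Nat.cast_one, pow_one]
    field_simp
    simp
  | succ m hm ih =>
    intro x hx
    have hm0 : (m:ℝ) ≠ 0 := by positivity
    set F := fun y => η (Real.sqrt y) with hF
    set G : ℕ → ℝ := fun j => x ^ ((j:ℝ)/2) * iteratedDeriv j η (Real.sqrt x) with hG
    set K : ℝ := -((Nat.factorial (m - 1) : ℝ) / 2 ^ (2 * m - 1)) with hK
    -- derivative of the sum
    have hSder : HasDerivAt
        (fun y : ℝ => ∑ j ∈ Finset.Icc 1 m,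
          cCoef j m * (y ^ ((j:ℝ)/2) * iteratedDeriv j η (Real.sqrt y)))
        (∑ j ∈ Finset.Icc 1 m,
          cCoef j m * (1/(2*x) * ((j:ℝ) * G j + G (j+1)))) x := by
      refine HasDerivAt.fun_sum fun j hj => ?_
      exact (hasDerivAt_g hη j hx).const_mul (cCoef j m)
    have hpow : HasDerivAt (fun y : ℝ => (y ^ m)⁻¹)
        (-(↑m * x ^ (m - 1)) / (x ^ m) ^ 2) x :=
      (hasDerivAt_pow m x).inv (pow_ne_zero m hx.ne')
    have hR : HasDerivAt
        (fun y : ℝ => K * ((y ^ m)⁻¹ *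
          ∑ j ∈ Finset.Icc 1 m, cCoef j m * (y ^ ((j:ℝ)/2) * iteratedDeriv j η (Real.sqrt y))))
        (K * ((-(↑m * x ^ (m - 1)) / (x ^ m) ^ 2) * (∑ j ∈ Finset.Icc 1 m, cCoef j m * G j)
          + (x ^ m)⁻¹ * ∑ j ∈ Finset.Icc 1 m, cCoef j m * (1/(2*x) * ((j:ℝ) * G j + G (j+1))))) x :=
      (hpow.mul hSder).const_mul K
    have heq : iteratedDeriv m F =ᶠ[nhds x]
        (fun y : ℝ => K * ((y ^ m)⁻¹ *
          ∑ j ∈ Finset.Icc 1 m, cCoef j m * (y ^ ((j:ℝ)/2) * iteratedDeriv j η (Real.sqrt y)))) := by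
      filter_upwards [isOpen_Ioi.mem_nhds hx] with y hy
      rw [ih y hy, mul_assoc]
      congr 1
      congr 1
      exact Finset.sum_congr rfl fun j _ => by ring
    rw [iteratedDeriv_succ, heq.deriv_eq, hR.deriv]
    -- now pure algebra
    have key := cCoef_key m hm G
    have hT2 : ∑ j ∈ Finset.Icc 1 m, cCoef j m * (1/(2*x) * ((j:ℝ) * G j + G (j+1)))
        = (1/(2*x)) * ∑ j ∈ Finset.Icc 1 m, cCoef j m * ((j:ℝ) * G j + G (j+1)) := by
      rw [Finset.mul_sum]; exact Finset.sum_congr rfl fun j _ => by ring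
    have hsum : ∑ j ∈ Finset.Icc 1 (m+1),
        cCoef j (m+1) * x ^ ((j:ℝ)/2) * iteratedDeriv j η (Real.sqrt x)
        = ∑ j ∈ Finset.Icc 1 (m+1), cCoef j (m+1) * G j :=
      Finset.sum_congr rfl fun j _ => by rw [hG]; ring
    rw [hT2, hsum]
    set T1 := ∑ j ∈ Finset.Icc 1 m, cCoef j m * G j with hT1d
    set T2 := ∑ j ∈ Finset.Icc 1 m, cCoef j m * ((j:ℝ) * G j + G (j+1)) with hT2d
    set T3 := ∑ j ∈ Finset.Icc 1 (m+1), cCoef j (m+1) * G j with hT3d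
    -- key : m/4 * T3 = -m * T1 + 1/2 * T2
    have hT3 : T3 = 4 / (m:ℝ) * (-(m:ℝ) * T1 + 1/2 * T2) := by
      rw [← key]; field_simp
    rw [hT3]
    have e2 : 2 * (m+1) - 1 = (2*m - 1) + 2 := by omega
    have e3 : (Nat.factorial m : ℝ) = (m:ℝ) * Nat.factorial (m-1) := by
      exact_mod_cast (Nat.mul_factorial_pred (by omega)).symm
    have e4 : x ^ (m+1) = x ^ (m-1) * x ^ 2 := by
      rw [← pow_add]; congr 1; omega
    rw [show m + 1 - 1 = m from rfl, e2, e3, e4, pow_add]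
    have hxm : x ^ (m-1) ≠ 0 := pow_ne_zero _ hx.ne'
    have hxm2 : x ^ m ≠ 0 := pow_ne_zero _ hx.ne'
    have h2m : (2:ℝ) ^ (2*m-1) ≠ 0 := by positivity
    have hxm3 : x ^ m = x ^ (m-1) * x := by
      rw [← pow_succ]; congr 1; omega
    rw [hxm3, hK]
    field_simp
    ring
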